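/- Let L be the combinatorial graph Laplacian of a connected weighted graph on vertex set V, and let V_1 ⊊ V with V_1 and V_1^c nonempty and |V_1| ≥ 2. Then the smallest eigenvalue of the Kron reduction K(L,V_1) equals 0 (matching the smallest eigenvalue of L), and the largest eigenvalue of K(L,V_1) is at most the largest eigenvalue λ_max of L. -/

import Mathlib

open Matrix

noncomputable def deg {n : Type*} [Fintype n] (W : Matrix n n ℝ) (i : n) : ℝ := ∑ j, W i j

noncomputable def lap {n : Type*} [Fintype n] [DecidableEq n] (W : Matrix n n ℝ) :
    Matrix n n ℝ :=
  Matrix.diagonal (deg W) - W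

def IsConn {n : Type*} (W : Matrix n n ℝ) : Prop :=
  ∀ i j : n, Relation.ReflTransGen (fun a b => 0 < W a b) i j

def IsBipartiteWith {n : Type*} (W : Matrix n n ℝ) (V1 : Set n) : Prop :=
  ∀ i j, 0 < W i j → (i ∈ V1 ↔ j ∉ V1)

open Classical in
noncomputable def sortedEigs {n : Type*} [Fintype n] [DecidableEq n] (A : Matrix n n ℝ) :
    Fin (Fintype.card n) → ℝ :=
  if h : A.IsHermitian then
    (fun i => h.eigenvalues ((Fintype.equivFin n).symm i)) ∘
      ⇑(Tuple.sort fun i => h.eigenvalues ((Fintype.equivFin n).symm i))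
  else 0

noncomputable def kron {n : Type*} [Fintype n] [DecidableEq n] (L : Matrix n n ℝ)
    (V1 : Finset n) : Matrix ↥V1 ↥V1 ℝ :=
  L.submatrix (Subtype.val : ↥V1 → n) (Subtype.val : ↥V1 → n) -
    L.submatrix (Subtype.val : ↥V1 → n) (Subtype.val : ↥(V1ᶜ) → n) *
      (L.submatrix (Subtype.val : ↥(V1ᶜ) → n) (Subtype.val : ↥(V1ᶜ) → n))⁻¹ *
      L.submatrix (Subtype.val : ↥(V1ᶜ) → n) (Subtype.val : ↥V1 → n)

noncomputable def wred {m : Type*} [DecidableEq m] (K : Matrix m m ℝ) : Matrix m m ℝ :=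
  Matrix.of fun i j => if i = j then 0 else -K i j


/-!
The Laplacian `L` is positive semidefinite and annihilates constants. By connectivity its principal
block `D = L_{V₁ᶜ,V₁ᶜ}` is positive definite: a vector with `xᵀ D x = 0`, extended by zero, has
zero `L`-energy, so it is constant, and it vanishes on `V₁ ≠ ∅`. The Kron reduction
`K = A - B D⁻¹ Bᵀ` is the Schur complement of `D`, hence positive semidefinite, and it still
annihilates constants, so `λ₀(K) = 0 = λ₀(L)`. For the top eigenvalue, `L ≤ λ_max • 1` in the
Loewner order restricts to `A ≤ λ_max • 1`, and `B D⁻¹ Bᵀ ≥ 0`, so `K ≤ λ_max • 1`.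
-/

open scoped MatrixOrder

section sortedEigs

variable {n : Type*} [Fintype n] [DecidableEq n] {A : Matrix n n ℝ}

theorem Matrix.IsHermitian.le_smul_one_iff_eigenvalues_le (hA : A.IsHermitian) (c : ℝ) :
    A ≤ c • 1 ↔ ∀ i, hA.eigenvalues i ≤ c := by
  rw [← Algebra.algebraMap_eq_smul_one, le_algebraMap_iff_spectrum_le hA.isSelfAdjoint,
    hA.spectrum_real_eq_range_eigenvalues, Set.forall_mem_range]

theorem sortedEigs_of_isHermitian (hA : A.IsHermitian) :
    sortedEigs A = (fun i => hA.eigenvalues ((Fintype.equivFin n).symm i)) ∘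
      ⇑(Tuple.sort fun i => hA.eigenvalues ((Fintype.equivFin n).symm i)) := by
  rw [sortedEigs, dif_pos hA]

theorem sortedEigs_monotone (hA : A.IsHermitian) : Monotone (sortedEigs A) := by
  rw [sortedEigs_of_isHermitian hA]
  exact Tuple.monotone_sort _

theorem range_sortedEigs (hA : A.IsHermitian) :
    Set.range (sortedEigs A) = Set.range hA.eigenvalues := by
  rw [sortedEigs_of_isHermitian hA, EquivLike.range_comp, ← Function.comp_def, EquivLike.range_comp]

theorem sortedEigs_le_iff_le_smul_one (hA : A.IsHermitian) {k : Fin (Fintype.card n)}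
    (hk : IsTop k) (c : ℝ) : sortedEigs A k ≤ c ↔ A ≤ c • 1 := by
  rw [hA.le_smul_one_iff_eigenvalues_le, ← Set.forall_mem_range (p := (· ≤ c)),
    ← range_sortedEigs hA, Set.forall_mem_range]
  exact ⟨fun h j => (sortedEigs_monotone hA (hk j)).trans h, fun h => h k⟩

theorem sortedEigs_eq_zero_of_mulVec_eq_zero (hA : A.PosSemidef) {v : n → ℝ} (hv : v ≠ 0)
    (hAv : A *ᵥ v = 0) {k : Fin (Fintype.card n)} (hk : IsBot k) : sortedEigs A k = 0 := by
  obtain ⟨i, hi⟩ : ∃ i, hA.1.eigenvalues i = 0 := by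
    simpa [hA.1.det_eq_prod_eigenvalues, Finset.prod_eq_zero_iff] using
      exists_mulVec_eq_zero_iff.mp ⟨v, hv, hAv⟩
  obtain ⟨j, hj⟩ : hA.1.eigenvalues i ∈ Set.range (sortedEigs A) :=
    range_sortedEigs hA.1 ▸ Set.mem_range_self i
  obtain ⟨l, hl⟩ : sortedEigs A k ∈ Set.range hA.1.eigenvalues :=
    range_sortedEigs hA.1 ▸ Set.mem_range_self k
  refine le_antisymm ?_ (hl ▸ hA.eigenvalues_nonneg l)
  exact hi ▸ hj ▸ sortedEigs_monotone hA.1 (hk j)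

end sortedEigs

theorem Matrix.IsHermitian.submatrix_swap {α m k l : Type*} [Star α] {L : Matrix m m α}
    (hL : L.IsHermitian) (r : k → m) (c : l → m) : L.submatrix c r = (L.submatrix r c)ᴴ := by
  rw [conjTranspose_submatrix, hL.eq]

section kron

variable {n : Type*} [Fintype n] [DecidableEq n] {L : Matrix n n ℝ} (s : Finset n)

theorem submatrix_mulVec_add_submatrix_compl_mulVec {k : Type*} (r : k → n) (x : n → ℝ) :
    L.submatrix r (Subtype.val : s → n) *ᵥ (x ∘ Subtype.val) +
      L.submatrix r (Subtype.val : ↥sᶜ → n) *ᵥ (x ∘ Subtype.val) = (L *ᵥ x) ∘ r := by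
  funext i
  simp only [Pi.add_apply, mulVec, dotProduct, submatrix_apply, Function.comp_apply]
  rw [Finset.sum_coe_sort s (fun j => L (r i) j * x j),
    Finset.sum_coe_sort sᶜ (fun j => L (r i) j * x j), Finset.sum_add_sum_compl]

theorem dotProduct_submatrix_compl_mulVec {y : n → ℝ} (hy : ∀ i ∈ s, y i = 0) :
    (y ∘ Subtype.val) ⬝ᵥ
        (L.submatrix (Subtype.val : ↥sᶜ → n) (Subtype.val : ↥sᶜ → n) *ᵥ (y ∘ Subtype.val)) =
      y ⬝ᵥ (L *ᵥ y) := by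
  have hys : (y ∘ Subtype.val : s → ℝ) = 0 := funext fun i => hy i i.2
  have hLy := submatrix_mulVec_add_submatrix_compl_mulVec s (L := L) (Subtype.val : ↥sᶜ → n) y
  rw [hys, mulVec_zero, zero_add] at hLy
  rw [hLy]
  calc _ = ∑ i ∈ sᶜ, y i * (L *ᵥ y) i := Finset.sum_coe_sort sᶜ fun i => y i * (L *ᵥ y) i
    _ = y ⬝ᵥ (L *ᵥ y) := by
      rw [dotProduct, ← Finset.sum_add_sum_compl s,
        Finset.sum_eq_zero (s := s) fun i hi => by rw [hy i hi, zero_mul], zero_add]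

theorem posSemidef_kron (hL : L.PosSemidef)
    (hD : (L.submatrix (Subtype.val : ↥sᶜ → n) (Subtype.val : ↥sᶜ → n)).PosDef) :
    (kron L s).PosSemidef := by
  have : Invertible (L.submatrix (Subtype.val : ↥sᶜ → n) (Subtype.val : ↥sᶜ → n)) :=
    hD.isUnit.invertible
  let e : s ⊕ ↥sᶜ ≃ n := (Equiv.sumCongr (Equiv.refl s)
    (Equiv.subtypeEquivRight fun _ => Finset.mem_compl)).trans (Equiv.sumCompl (· ∈ s))
  have hblocks : L.submatrix e e = fromBlocks (L.submatrix Subtype.val Subtype.val)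
      (L.submatrix Subtype.val Subtype.val) (L.submatrix Subtype.val Subtype.val)
      (L.submatrix Subtype.val Subtype.val) := by
    ext (i | i) (j | j) <;> rfl
  have hC := hL.1.submatrix_swap (Subtype.val : s → n) (Subtype.val : ↥sᶜ → n)
  rw [kron, hC]
  refine (PosDef.fromBlocks₂₂ _ _ hD).mp ?_
  rw [← hC, ← hblocks]
  exact hL.submatrix e

theorem kron_le_smul_one (hL : L.PosSemidef) {c : ℝ} (hc : L ≤ c • 1) : kron L s ≤ c • 1 := by
  have hA : (c • 1 - L.submatrix (Subtype.val : s → n) (Subtype.val : s → n)).PosSemidef := by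
    have h := (le_iff.mp hc).submatrix (Subtype.val : s → n)
    rwa [submatrix_sub, Pi.sub_apply, Pi.sub_apply, submatrix_smul, Pi.smul_apply, Pi.smul_apply,
      submatrix_one _ Subtype.val_injective] at h
  rw [le_iff, kron, hL.1.submatrix_swap (Subtype.val : s → n) (Subtype.val : ↥sᶜ → n),
    sub_sub_eq_add_sub, add_sub_right_comm]
  exact hA.add ((hL.submatrix _).inv.mul_mul_conjTranspose_same _)

theorem kron_mulVec_eq_zero
    (hD : IsUnit (L.submatrix (Subtype.val : ↥sᶜ → n) (Subtype.val : ↥sᶜ → n)))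
    {x : n → ℝ} (hx : L *ᵥ x = 0) : kron L s *ᵥ (x ∘ Subtype.val) = 0 := by
  have hs := submatrix_mulVec_add_submatrix_compl_mulVec s (L := L) (Subtype.val : s → n) x
  have hsc := submatrix_mulVec_add_submatrix_compl_mulVec s (L := L) (Subtype.val : ↥sᶜ → n) x
  rw [hx, Pi.zero_comp] at hs hsc
  have hsolve : (L.submatrix (Subtype.val : ↥sᶜ → n) (Subtype.val : ↥sᶜ → n))⁻¹ *ᵥ
      (L.submatrix (Subtype.val : ↥sᶜ → n) (Subtype.val : s → n) *ᵥ (x ∘ Subtype.val)) =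
      -(x ∘ Subtype.val) := by
    rw [eq_neg_of_add_eq_zero_left hsc, mulVec_neg, mulVec_mulVec,
      nonsing_inv_mul _ ((isUnit_iff_isUnit_det _).mp hD), one_mulVec]
  rw [kron, sub_mulVec, ← mulVec_mulVec, ← mulVec_mulVec, hsolve, mulVec_neg, sub_neg_eq_add, hs]

end kron

section laplacian

variable {n : Type*} [Fintype n] [DecidableEq n] {W : Matrix n n ℝ}

theorem lap_isHermitian (hsymm : W.IsSymm) : (lap W).IsHermitian :=
  (isHermitian_diagonal _).sub <| by
    rw [IsHermitian, conjTranspose_eq_transpose_of_trivial]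
    exact hsymm

theorem lap_mulVec_apply (x : n → ℝ) (i : n) :
    (lap W *ᵥ x) i = ∑ j, W i j * (x i - x j) := by
  rw [lap, sub_mulVec, Pi.sub_apply, mulVec_diagonal]
  simp only [deg, mulVec, dotProduct, mul_sub, Finset.sum_sub_distrib, Finset.sum_mul]

theorem lap_mulVec_one : lap W *ᵥ 1 = 0 := by
  funext i
  simp [lap_mulVec_apply]

theorem dotProduct_lap_mulVec (hsymm : W.IsSymm) (x : n → ℝ) :
    x ⬝ᵥ (lap W *ᵥ x) = (∑ i, ∑ j, W i j * (x i - x j) ^ 2) / 2 := by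
  have hexpand : x ⬝ᵥ (lap W *ᵥ x) = ∑ i, ∑ j, W i j * x i * (x i - x j) := by
    simp only [dotProduct, lap_mulVec_apply, Finset.mul_sum]
    exact Finset.sum_congr rfl fun i _ => Finset.sum_congr rfl fun j _ => by ring
  have hswap : ∑ i, ∑ j, W i j * x i * (x i - x j) = ∑ i, ∑ j, W i j * x j * (x j - x i) := by
    rw [Finset.sum_comm]
    simp only [hsymm.apply]
  have hsq : ∑ i, ∑ j, W i j * (x i - x j) ^ 2 =
      ∑ i, ∑ j, W i j * x i * (x i - x j) + ∑ i, ∑ j, W i j * x j * (x j - x i) := by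
    simp only [← Finset.sum_add_distrib]
    exact Finset.sum_congr rfl fun i _ => Finset.sum_congr rfl fun j _ => by ring
  rw [hsq, ← hswap, hexpand]
  ring

theorem lap_posSemidef (hsymm : W.IsSymm) (hnonneg : ∀ i j, 0 ≤ W i j) : (lap W).PosSemidef :=
  posSemidef_iff_dotProduct_mulVec.mpr ⟨lap_isHermitian hsymm, fun x => by
    rw [star_trivial, dotProduct_lap_mulVec hsymm]
    exact div_nonneg (Fintype.sum_nonneg fun i => Fintype.sum_nonneg fun j =>
      mul_nonneg (hnonneg i j) (sq_nonneg _)) zero_le_two⟩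

theorem IsConn.eq_of_dotProduct_lap_mulVec_eq_zero (hconn : IsConn W) (hsymm : W.IsSymm)
    (hnonneg : ∀ i j, 0 ≤ W i j) {x : n → ℝ} (hx : x ⬝ᵥ (lap W *ᵥ x) = 0) (i j : n) :
    x i = x j := by
  have hnn : ∀ i j, 0 ≤ W i j * (x i - x j) ^ 2 := fun i j =>
    mul_nonneg (hnonneg i j) (sq_nonneg _)
  have hterms : ∀ i j, W i j * (x i - x j) ^ 2 = 0 := by
    have hsum : ∑ i, ∑ j, W i j * (x i - x j) ^ 2 = 0 := by
      rw [dotProduct_lap_mulVec hsymm] at hx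
      linarith
    rw [Fintype.sum_eq_zero_iff_of_nonneg fun i => Fintype.sum_nonneg (hnn i)] at hsum
    exact fun i => congrFun ((Fintype.sum_eq_zero_iff_of_nonneg (hnn i)).mp (congrFun hsum i))
  induction hconn i j with
  | refl => rfl
  | @tail b c _ hedge ih =>
    rw [ih]
    simpa [hedge.ne', sub_eq_zero] using hterms b c

theorem lap_submatrix_compl_posDef (hconn : IsConn W) (hsymm : W.IsSymm)
    (hnonneg : ∀ i j, 0 ≤ W i j) {s : Finset n} (hs : s.Nonempty) :
    ((lap W).submatrix (Subtype.val : ↥sᶜ → n) (Subtype.val : ↥sᶜ → n)).PosDef := by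
  refine posDef_iff_dotProduct_mulVec.mpr ⟨(lap_isHermitian hsymm).submatrix _, fun x hx => ?_⟩
  let y : n → ℝ := fun k => if h : k ∈ sᶜ then x ⟨k, h⟩ else 0
  have hy : ∀ i ∈ s, y i = 0 := fun i hi => dif_neg (Finset.notMem_compl.mpr hi)
  have hyx : y ∘ Subtype.val = x := funext fun j => dif_pos j.2
  rw [star_trivial, ← hyx, dotProduct_submatrix_compl_mulVec s hy]
  refine (star_trivial y ▸ (lap_posSemidef hsymm hnonneg).dotProduct_mulVec_nonneg y).lt_of_ne'
    fun h0 => hx ?_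
  obtain ⟨i, hi⟩ := hs
  rw [← hyx]
  funext j
  rw [Function.comp_apply, hconn.eq_of_dotProduct_lap_mulVec_eq_zero hsymm hnonneg h0 j i,
    hy i hi, Pi.zero_apply]

end laplacian

/-- The smallest eigenvalue of the Kron reduction of a connected graph Laplacian is `0`
(matching the smallest eigenvalue of `L`), and its largest eigenvalue is at most the
largest eigenvalue of `L`. -/
theorem kron_reduction_extreme_eigenvalues
    {N : ℕ} (W : Matrix (Fin N) (Fin N) ℝ)
    (hsymm : W.IsSymm) (hnonneg : ∀ i j, 0 ≤ W i j)
    (hconn : IsConn W) (V1 : Finset (Fin N)) (hcard : 2 ≤ V1.card) :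
    sortedEigs (kron (lap W) V1) ⟨0, by simp only [Fintype.card_coe]; omega⟩ = 0 ∧
    sortedEigs (lap W) ⟨0, by
        simp only [Fintype.card_fin]
        have hle : V1.card ≤ N := by simpa using V1.card_le_univ
        omega⟩ = 0 ∧
    sortedEigs (kron (lap W) V1)
        ⟨Fintype.card ↥V1 - 1, by simp only [Fintype.card_coe]; omega⟩ ≤
      sortedEigs (lap W) ⟨N - 1, by
        simp only [Fintype.card_fin]
        have hle : V1.card ≤ N := by simpa using V1.card_le_univ
        omega⟩ := by
  obtain ⟨v, hv⟩ : V1.Nonempty := Finset.card_pos.mp (by omega)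
  have hL := lap_posSemidef hsymm hnonneg
  have hD := lap_submatrix_compl_posDef hconn hsymm hnonneg ⟨v, hv⟩
  have hK := posSemidef_kron V1 hL hD
  refine ⟨sortedEigs_eq_zero_of_mulVec_eq_zero hK (Function.ne_iff.mpr ⟨⟨v, hv⟩, one_ne_zero⟩)
      (kron_mulVec_eq_zero V1 hD.isUnit lap_mulVec_one) fun _ => Nat.zero_le _,
    sortedEigs_eq_zero_of_mulVec_eq_zero hL (Function.ne_iff.mpr ⟨v, one_ne_zero⟩)
      lap_mulVec_one fun _ => Nat.zero_le _, ?_⟩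
  rw [sortedEigs_le_iff_le_smul_one hK.1 fun j => Nat.le_sub_one_of_lt j.isLt]
  refine kron_le_smul_one V1 hL ((sortedEigs_le_iff_le_smul_one hL.1 (fun j => ?_) _).mp le_rfl)
  exact Nat.le_sub_one_of_lt (by simpa using j.isLt)
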